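/- Let W ⊂ ℂ^3 ⊗ ℂ^3 ⊗ ℂ^3 be the union of {ψ_i ⊗ |0⟩ : 1 ≤ i ≤ 5}, where ψ_1,…,ψ_5 is the Tiles UPB in ℂ^3⊗ℂ^3, together with {|i⟩⊗|j⟩⊗|1⟩ : i,j ∈ ℤ_3} and {|i⟩⊗|j⟩⊗|2⟩ : i,j ∈ ℤ_3}. Then W is a pairwise orthogonal set of 23 product states, and no nonzero product state u⊗v⊗w is orthogonal to all of W (i.e., W is a UPB in ℂ^3⊗ℂ^3⊗ℂ^3). -/
import Mathlib


noncomputable section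


def ket (i : Fin 3) : Fin 3 → ℂ := fun j => if j = i then 1 else 0

/-- The A-parts of the Tiles UPB in ℂ³⊗ℂ³. -/
def tA : Fin 5 → (Fin 3 → ℂ)
  | 0 => ket 0
  | 1 => ket 0 - ket 1
  | 2 => ket 2
  | 3 => ket 1 - ket 2
  | 4 => ket 0 + ket 1 + ket 2

/-- The B-parts of the Tiles UPB in ℂ³⊗ℂ³. -/
def tB : Fin 5 → (Fin 3 → ℂ)
  | 0 => ket 0 - ket 1
  | 1 => ket 2
  | 2 => ket 1 - ket 2
  | 3 => ket 0
  | 4 => ket 0 + ket 1 + ket 2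

/-- The Tiles UPB in ℂ³⊗ℂ³. -/
def tiles : Fin 5 → (Fin 3 × Fin 3 → ℂ) := fun k x => tA k x.1 * tB k x.2

/-- The tripartite set W ⊂ ℂ³⊗ℂ³⊗ℂ³: the Tiles UPB tensored with |0⟩,
together with the two computational layers |i⟩|j⟩|1⟩ and |i⟩|j⟩|2⟩. -/
def Wset : Set (Fin 3 × Fin 3 × Fin 3 → ℂ) :=
  {x | ∃ k : Fin 5, x = fun t => tiles k (t.1, t.2.1) * ket 0 t.2.2} ∪
  {x | ∃ i j : Fin 3, x = fun t => ket i t.1 * ket j t.2.1 * ket 1 t.2.2} ∪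
  {x | ∃ i j : Fin 3, x = fun t => ket i t.1 * ket j t.2.1 * ket 2 t.2.2}

set_option linter.unreachableTactic false
set_option linter.unusedTactic false

lemma inner3 (a b c a' b' c' : Fin 3 → ℂ) :
    ∑ t : Fin 3 × Fin 3 × Fin 3, (starRingEnd ℂ) (a t.1 * b t.2.1 * c t.2.2) * (a' t.1 * b' t.2.1 * c' t.2.2)
    = (∑ i, (starRingEnd ℂ) (a i) * a' i) * (∑ i, (starRingEnd ℂ) (b i) * b' i) *
      (∑ i, (starRingEnd ℂ) (c i) * c' i) := by
  simp [Fintype.sum_prod_type, Fin.sum_univ_three, map_mul]; ring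

lemma ip_ket (i : Fin 3) (u : Fin 3 → ℂ) :
    ∑ m, (starRingEnd ℂ) (ket i m) * u m = u i := by
  fin_cases i <;> simp [ket, Fin.sum_univ_three]

lemma ipA0 (u : Fin 3 → ℂ) : ∑ i, (starRingEnd ℂ) (tA 0 i) * u i = u 0 := by
  simp [tA, ket, Fin.sum_univ_three]
  try ring
lemma ipA1 (u : Fin 3 → ℂ) : ∑ i, (starRingEnd ℂ) (tA 1 i) * u i = u 0 - u 1 := by
  simp [tA, ket, Fin.sum_univ_three]
  try ring
lemma ipA4 (u : Fin 3 → ℂ) : ∑ i, (starRingEnd ℂ) (tA 4 i) * u i = u 0 + u 1 + u 2 := by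
  simp [tA, ket, Fin.sum_univ_three]
  try ring
lemma ipA2 (u : Fin 3 → ℂ) : ∑ i, (starRingEnd ℂ) (tA 2 i) * u i = u 2 := by
  simp [tA, ket, Fin.sum_univ_three]
  try ring
lemma ipA3 (u : Fin 3 → ℂ) : ∑ i, (starRingEnd ℂ) (tA 3 i) * u i = u 1 - u 2 := by
  simp [tA, ket, Fin.sum_univ_three]
  try ring
lemma ipB0 (u : Fin 3 → ℂ) : ∑ i, (starRingEnd ℂ) (tB 0 i) * u i = u 0 - u 1 := by
  simp [tB, ket, Fin.sum_univ_three]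
  try ring
lemma ipB1 (u : Fin 3 → ℂ) : ∑ i, (starRingEnd ℂ) (tB 1 i) * u i = u 2 := by
  simp [tB, ket, Fin.sum_univ_three]
  try ring
lemma ipB2 (u : Fin 3 → ℂ) : ∑ i, (starRingEnd ℂ) (tB 2 i) * u i = u 1 - u 2 := by
  simp [tB, ket, Fin.sum_univ_three]
  try ring
lemma ipB3 (u : Fin 3 → ℂ) : ∑ i, (starRingEnd ℂ) (tB 3 i) * u i = u 0 := by
  simp [tB, ket, Fin.sum_univ_three]
  try ring
lemma ipB4 (u : Fin 3 → ℂ) : ∑ i, (starRingEnd ℂ) (tB 4 i) * u i = u 0 + u 1 + u 2 := by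
  simp [tB, ket, Fin.sum_univ_three]
  try ring

lemma tiles_orth (k k' : Fin 5) (hkk : k ≠ k') :
    (∑ i, (starRingEnd ℂ) (tA k i) * tA k' i) * (∑ j, (starRingEnd ℂ) (tB k j) * tB k' j) = 0 := by
  fin_cases k <;> fin_cases k' <;>
    simp_all [tA, tB, ket, Fin.sum_univ_three] <;> try ring

section uz
variable {x : Fin 3 → ℂ}

lemma uzfin (e0 : x 0 = 0) (e1 : x 1 = 0) (e2 : x 2 = 0) : ∀ i, x i = 0 := by
  intro i; fin_cases i <;> assumption

lemma uz012 (h0 : x 0 = 0) (h1 : x 0 - x 1 = 0) (h2 : x 2 = 0) : ∀ i, x i = 0 :=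
  uzfin h0 (by linear_combination h0 - h1) h2

lemma uz013 (h0 : x 0 = 0) (h1 : x 0 - x 1 = 0) (h3 : x 1 - x 2 = 0) : ∀ i, x i = 0 :=
  uzfin h0 (by linear_combination h0 - h1) (by linear_combination h0 - h1 - h3)

lemma uz014 (h0 : x 0 = 0) (h1 : x 0 - x 1 = 0) (h4 : x 0 + x 1 + x 2 = 0) : ∀ i, x i = 0 :=
  uzfin h0 (by linear_combination h0 - h1) (by linear_combination h4 - 2*h0 + h1)

lemma uz023 (h0 : x 0 = 0) (h2 : x 2 = 0) (h3 : x 1 - x 2 = 0) : ∀ i, x i = 0 :=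
  uzfin h0 (by linear_combination h3 + h2) h2

lemma uz024 (h0 : x 0 = 0) (h2 : x 2 = 0) (h4 : x 0 + x 1 + x 2 = 0) : ∀ i, x i = 0 :=
  uzfin h0 (by linear_combination h4 - h0 - h2) h2

lemma uz034 (h0 : x 0 = 0) (h3 : x 1 - x 2 = 0) (h4 : x 0 + x 1 + x 2 = 0) : ∀ i, x i = 0 :=
  uzfin h0 (by linear_combination (h4 - h0 + h3)/2) (by linear_combination (h4 - h0 - h3)/2)

lemma uz123 (h1 : x 0 - x 1 = 0) (h2 : x 2 = 0) (h3 : x 1 - x 2 = 0) : ∀ i, x i = 0 :=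
  uzfin (by linear_combination h1 + h3 + h2) (by linear_combination h3 + h2) h2

lemma uz124 (h1 : x 0 - x 1 = 0) (h2 : x 2 = 0) (h4 : x 0 + x 1 + x 2 = 0) : ∀ i, x i = 0 :=
  uzfin (by linear_combination (h4 - h2 + h1)/2) (by linear_combination (h4 - h2 - h1)/2) h2

lemma uz134 (h1 : x 0 - x 1 = 0) (h3 : x 1 - x 2 = 0) (h4 : x 0 + x 1 + x 2 = 0) : ∀ i, x i = 0 :=
  uzfin (by linear_combination (2*h1 + h3 + h4)/3) (by linear_combination (-h1 + h3 + h4)/3)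
    (by linear_combination (-h1 - 2*h3 + h4)/3)

lemma uz234 (h2 : x 2 = 0) (h3 : x 1 - x 2 = 0) (h4 : x 0 + x 1 + x 2 = 0) : ∀ i, x i = 0 :=
  uzfin (by linear_combination h4 - h3 - 2*h2) (by linear_combination h3 + h2) h2

end uz

lemma upb : (∀ u v w : Fin 3 → ℂ,
      (∀ x ∈ Wset,
        ∑ t : Fin 3 × Fin 3 × Fin 3, (starRingEnd ℂ) (x t) * (u t.1 * v t.2.1 * w t.2.2) = 0) →
      (fun t : Fin 3 × Fin 3 × Fin 3 => u t.1 * v t.2.1 * w t.2.2) = 0) := by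
  intro u v w h
  have h1 : ∀ i j : Fin 3, u i * v j * w 1 = 0 := by
    intro i j
    have hh := h _ (Or.inl (Or.inr ⟨i, j, rfl⟩))
    have e := inner3 (ket i) (ket j) (ket 1) u v w
    rw [ip_ket, ip_ket, ip_ket] at e
    exact e.symm.trans hh
  have h2 : ∀ i j : Fin 3, u i * v j * w 2 = 0 := by
    intro i j
    have hh := h _ (Or.inr ⟨i, j, rfl⟩)
    have e := inner3 (ket i) (ket j) (ket 2) u v w
    rw [ip_ket, ip_ket, ip_ket] at e
    exact e.symm.trans hh
  have hT : ∀ k : Fin 5,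
      (∑ i, (starRingEnd ℂ) (tA k i) * u i) * (∑ j, (starRingEnd ℂ) (tB k j) * v j) * w 0 = 0 := by
    intro k
    have hh := h _ (Or.inl (Or.inl ⟨k, rfl⟩))
    have e := inner3 (tA k) (tB k) (ket 0) u v w
    rw [ip_ket] at e
    exact e.symm.trans hh
  by_cases hw : w 0 = 0
  · funext t
    obtain ⟨i, j, c⟩ := t
    show u i * v j * w c = 0
    fin_cases c
    · show u i * v j * w 0 = 0
      rw [hw, mul_zero]
    · exact h1 i j
    · exact h2 i j
  · have t0 := (mul_eq_zero.mp (hT 0)).resolve_right hw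
    have t1 := (mul_eq_zero.mp (hT 1)).resolve_right hw
    have t2 := (mul_eq_zero.mp (hT 2)).resolve_right hw
    have t3 := (mul_eq_zero.mp (hT 3)).resolve_right hw
    have t4 := (mul_eq_zero.mp (hT 4)).resolve_right hw
    rw [ipA0, ipB0] at t0
    rw [ipA1, ipB1] at t1
    rw [ipA2, ipB2] at t2
    rw [ipA3, ipB3] at t3
    rw [ipA4, ipB4] at t4
    have claim : (∀ i, u i = 0) ∨ (∀ j, v j = 0) := by
      rcases mul_eq_zero.mp t0 with h0 | h0 <;>
      rcases mul_eq_zero.mp t1 with h1 | h1 <;>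
      rcases mul_eq_zero.mp t2 with h2 | h2 <;>
      rcases mul_eq_zero.mp t3 with h3 | h3 <;>
      rcases mul_eq_zero.mp t4 with h4 | h4 <;>
      first
      | exact Or.inl (uz012 h0 h1 h2)
      | exact Or.inl (uz013 h0 h1 h3)
      | exact Or.inl (uz014 h0 h1 h4)
      | exact Or.inl (uz023 h0 h2 h3)
      | exact Or.inl (uz024 h0 h2 h4)
      | exact Or.inl (uz034 h0 h3 h4)
      | exact Or.inl (uz123 h1 h2 h3)
      | exact Or.inl (uz124 h1 h2 h4)
      | exact Or.inl (uz134 h1 h3 h4)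
      | exact Or.inl (uz234 h2 h3 h4)
      | exact Or.inr (uz123 h0 h1 h2)
      | exact Or.inr (uz012 h3 h0 h1)
      | exact Or.inr (uz124 h0 h1 h4)
      | exact Or.inr (uz013 h3 h0 h2)
      | exact Or.inr (uz134 h0 h2 h4)
      | exact Or.inr (uz014 h3 h0 h4)
      | exact Or.inr (uz023 h3 h1 h2)
      | exact Or.inr (uz234 h1 h2 h4)
      | exact Or.inr (uz024 h3 h1 h4)
      | exact Or.inr (uz034 h3 h2 h4)
    funext t
    rcases claim with hu | hv
    · show u t.1 * v t.2.1 * w t.2.2 = 0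
      rw [hu t.1, zero_mul, zero_mul]
    · show u t.1 * v t.2.1 * w t.2.2 = 0
      rw [hv t.2.1, mul_zero, zero_mul]

def wf : (Fin 5 ⊕ (Fin 3 × Fin 3) ⊕ (Fin 3 × Fin 3)) → (Fin 3 × Fin 3 × Fin 3 → ℂ)
  | .inl k => fun t => tiles k (t.1, t.2.1) * ket 0 t.2.2
  | .inr (.inl (i, j)) => fun t => ket i t.1 * ket j t.2.1 * ket 1 t.2.2
  | .inr (.inr (i, j)) => fun t => ket i t.1 * ket j t.2.1 * ket 2 t.2.2

lemma wset_range : Wset = Set.range wf := by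
  ext x
  constructor
  · rintro ((⟨k, rfl⟩ | ⟨i, j, rfl⟩) | ⟨i, j, rfl⟩)
    · exact ⟨.inl k, rfl⟩
    · exact ⟨.inr (.inl (i, j)), rfl⟩
    · exact ⟨.inr (.inr (i, j)), rfl⟩
  · rintro ⟨a, rfl⟩
    rcases a with k | ⟨i, j⟩ | ⟨i, j⟩
    · exact Or.inl (Or.inl ⟨k, rfl⟩)
    · exact Or.inl (Or.inr ⟨i, j, rfl⟩)
    · exact Or.inr ⟨i, j, rfl⟩

lemma wf_inj : Function.Injective wf := by
  intro a b hab
  rcases a with k | ⟨i, j⟩ | ⟨i, j⟩ <;> rcases b with k' | ⟨i', j'⟩ | ⟨i', j'⟩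
  · have hk : k = k' := by
      fin_cases k <;> fin_cases k' <;>
        first
        | rfl
        | (exfalso
           first
           | (have := congrFun hab (0, 0, 0); norm_num [wf, tiles, tA, tB, ket, Fin.ext_iff] at this; done)
           | (have := congrFun hab (0, 1, 0); norm_num [wf, tiles, tA, tB, ket, Fin.ext_iff] at this; done)
           | (have := congrFun hab (0, 2, 0); norm_num [wf, tiles, tA, tB, ket, Fin.ext_iff] at this; done)
           | (have := congrFun hab (1, 2, 0); norm_num [wf, tiles, tA, tB, ket, Fin.ext_iff] at this; done)
           | (have := congrFun hab (2, 0, 0); norm_num [wf, tiles, tA, tB, ket, Fin.ext_iff] at this; done)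
           | (have := congrFun hab (2, 1, 0); norm_num [wf, tiles, tA, tB, ket, Fin.ext_iff] at this; done)
           | (have := congrFun hab (2, 2, 0); norm_num [wf, tiles, tA, tB, ket, Fin.ext_iff] at this; done))
    rw [hk]
  · exfalso
    have := congrFun hab (i', j', 1)
    simp [wf, tiles, ket] at this
  · exfalso
    have := congrFun hab (i', j', 2)
    simp [wf, tiles, ket] at this
  · exfalso
    have := congrFun hab (i, j, 1)
    simp [wf, tiles, ket] at this
  · have hpt := congrFun hab (i, j, 1)
    by_cases hi : i = i'
    · by_cases hj : j = j'
      · rw [hi, hj]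
      · exfalso; simp [wf, ket, hi, hj] at hpt
    · exfalso; simp [wf, ket, hi] at hpt
  · exfalso
    have := congrFun hab (i, j, 1)
    simp [wf, ket] at this
  · exfalso
    have := congrFun hab (i, j, 2)
    simp [wf, tiles, ket] at this
  · exfalso
    have := congrFun hab (i, j, 2)
    simp [wf, ket] at this
  · have hpt := congrFun hab (i, j, 2)
    by_cases hi : i = i'
    · by_cases hj : j = j'
      · rw [hi, hj]
      · exfalso; simp [wf, ket, hi, hj] at hpt
    · exfalso; simp [wf, ket, hi] at hpt

lemma wset_card : Set.ncard Wset = 23 := by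
  rw [wset_range, ← Set.image_univ, Set.ncard_image_of_injective _ wf_inj]
  simp [Set.ncard_univ]

lemma wset_nonzero : ∀ x ∈ Wset, x ≠ 0 := by
  rintro x ((⟨k, rfl⟩ | ⟨i, j, rfl⟩) | ⟨i, j, rfl⟩) h0
  · fin_cases k <;>
      first
      | (have := congrFun h0 (0, 0, 0); norm_num [tiles, tA, tB, ket, Fin.ext_iff] at this; done)
      | (have := congrFun h0 (0, 2, 0); norm_num [tiles, tA, tB, ket, Fin.ext_iff] at this; done)
      | (have := congrFun h0 (2, 1, 0); norm_num [tiles, tA, tB, ket, Fin.ext_iff] at this; done)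
      | (have := congrFun h0 (1, 0, 0); norm_num [tiles, tA, tB, ket, Fin.ext_iff] at this; done)
  · have := congrFun h0 (i, j, 1); simp [ket] at this
  · have := congrFun h0 (i, j, 2); simp [ket] at this

lemma wset_prod : ∀ x ∈ Wset, ∃ u v w : Fin 3 → ℂ, x = fun t => u t.1 * v t.2.1 * w t.2.2 := by
  rintro x ((⟨k, rfl⟩ | ⟨i, j, rfl⟩) | ⟨i, j, rfl⟩)
  · exact ⟨tA k, tB k, ket 0, rfl⟩
  · exact ⟨ket i, ket j, ket 1, rfl⟩
  · exact ⟨ket i, ket j, ket 2, rfl⟩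

lemma ket_orth (i i' : Fin 3) (h : i ≠ i') : ∑ m, (starRingEnd ℂ) (ket i m) * ket i' m = 0 := by
  rw [ip_ket]; simp [ket, h]

lemma wset_orth : ∀ x ∈ Wset, ∀ y ∈ Wset, x ≠ y →
    ∑ t : Fin 3 × Fin 3 × Fin 3, (starRingEnd ℂ) (x t) * y t = 0 := by
  rintro x ((⟨k, rfl⟩ | ⟨i, j, rfl⟩) | ⟨i, j, rfl⟩) y
      ((⟨k', rfl⟩ | ⟨i', j', rfl⟩) | ⟨i', j', rfl⟩) hxy
  · -- tiles/tiles
    have hk : k ≠ k' := fun h => hxy (by rw [h])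
    refine (inner3 (tA k) (tB k) (ket 0) (tA k') (tB k') (ket 0)).trans ?_
    rw [tiles_orth k k' hk, zero_mul]
  · refine (inner3 (tA k) (tB k) (ket 0) (ket i') (ket j') (ket 1)).trans ?_
    rw [ket_orth 0 1 (by decide), mul_zero]
  · refine (inner3 (tA k) (tB k) (ket 0) (ket i') (ket j') (ket 2)).trans ?_
    rw [ket_orth 0 2 (by decide), mul_zero]
  · refine (inner3 (ket i) (ket j) (ket 1) (tA k') (tB k') (ket 0)).trans ?_
    rw [ket_orth 1 0 (by decide), mul_zero]
  · -- layer1/layer1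
    have hne : i ≠ i' ∨ j ≠ j' := by
      by_contra hcon
      push_neg at hcon
      exact hxy (by rw [hcon.1, hcon.2])
    refine (inner3 (ket i) (ket j) (ket 1) (ket i') (ket j') (ket 1)).trans ?_
    rcases hne with hne | hne
    · rw [ket_orth i i' hne, zero_mul, zero_mul]
    · rw [ket_orth j j' hne, mul_zero, zero_mul]
  · refine (inner3 (ket i) (ket j) (ket 1) (ket i') (ket j') (ket 2)).trans ?_
    rw [ket_orth 1 2 (by decide), mul_zero]
  · refine (inner3 (ket i) (ket j) (ket 2) (tA k') (tB k') (ket 0)).trans ?_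
    rw [ket_orth 2 0 (by decide), mul_zero]
  · refine (inner3 (ket i) (ket j) (ket 2) (ket i') (ket j') (ket 1)).trans ?_
    rw [ket_orth 2 1 (by decide), mul_zero]
  · have hne : i ≠ i' ∨ j ≠ j' := by
      by_contra hcon
      push_neg at hcon
      exact hxy (by rw [hcon.1, hcon.2])
    refine (inner3 (ket i) (ket j) (ket 2) (ket i') (ket j') (ket 2)).trans ?_
    rcases hne with hne | hne
    · rw [ket_orth i i' hne, zero_mul, zero_mul]
    · rw [ket_orth j j' hne, mul_zero, zero_mul]


/-- W is a pairwise orthogonal set of 23 product states and a UPB in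
ℂ³⊗ℂ³⊗ℂ³: no nonzero product state u⊗v⊗w is orthogonal to all of W. -/
theorem stmt_12 :
    Set.ncard Wset = 23 ∧
    (∀ x ∈ Wset, x ≠ 0) ∧
    (∀ x ∈ Wset, ∃ u v w : Fin 3 → ℂ, x = fun t => u t.1 * v t.2.1 * w t.2.2) ∧
    (∀ x ∈ Wset, ∀ y ∈ Wset, x ≠ y →
      ∑ t : Fin 3 × Fin 3 × Fin 3, (starRingEnd ℂ) (x t) * y t = 0) ∧
    (∀ u v w : Fin 3 → ℂ,
      (∀ x ∈ Wset,
        ∑ t : Fin 3 × Fin 3 × Fin 3, (starRingEnd ℂ) (x t) * (u t.1 * v t.2.1 * w t.2.2) = 0) →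
      (fun t : Fin 3 × Fin 3 × Fin 3 => u t.1 * v t.2.1 * w t.2.2) = 0) := by
  exact ⟨wset_card, wset_nonzero, wset_prod, wset_orth, upb⟩

end
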